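/- Let O be the d²×d² real matrix relating two normalized SIC POVMs {E_k} and {Ẽ_k} in dimension d via Ẽ_i = ∑_j O_{ij}E_j (which exists since {E_j} spans the space of Hermitian operators). Then O is an orthogonal matrix. -/

import Mathlib

open Matrix BigOperators
open scoped Kronecker

/-- Trace norm (sum of singular values) of a real matrix. -/
noncomputable def traceNorm {m n : Type*} [Fintype m] [Fintype n] [DecidableEq m]
    (M : Matrix m n ℝ) : ℝ :=
  ((Matrix.posSemidef_self_mul_conjTranspose M).isHermitian.eigenvectorUnitary.1 *
      diagonal ((RCLike.ofReal : ℝ → ℝ) ∘ (√·) ∘ (Matrix.posSemidef_self_mul_conjTranspose M).isHermitian.eigenvalues) *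
      (star (Matrix.posSemidef_self_mul_conjTranspose M).isHermitian.eigenvectorUnitary :
        Matrix m m ℝ)).trace

/-- The SIC overlap condition for a family of `d²` vectors in `ℂ^d`. -/
def IsSIC (d : ℕ) (ψ : Fin (d ^ 2) → Fin d → ℂ) : Prop :=
  ∀ i j, ‖dotProduct (star (ψ i)) (ψ j)‖ ^ 2 =
    ((if i = j then (d : ℝ) else 0) + 1) / ((d : ℝ) + 1)

/-- The SIC POVM element `Π_k = |ψ_k⟩⟨ψ_k| / d`. -/
noncomputable def sicProj (d : ℕ) (ψ : Fin (d ^ 2) → Fin d → ℂ) (k : Fin (d ^ 2)) :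
    Matrix (Fin d) (Fin d) ℂ :=
  (d : ℂ)⁻¹ • vecMulVec (ψ k) (star (ψ k))

/-! The trace Gram matrix of any SIC is `G = a • 1 + b • J` with `a ≠ 0` and `J` the all-ones
matrix, so cancelling the common normalisation, `Ẽ = O E` gives `O G Oᵀ = G`. All SIC elements
have the same nonzero trace, so taking traces in `Ẽ_i = ∑ O_ij E_j` shows that `O` fixes the
all-ones vector; hence `O J Oᵀ = J`, and what is left is `a • O Oᵀ = a • 1`. -/

namespace Matrix

variable {ι n R K : Type*} [Fintype ι] [Fintype n]

def traceGram [Mul R] [AddCommMonoid R] (F : ι → Matrix n n R) : Matrix ι ι R :=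
  of fun i j => (F i * F j).trace

theorem traceGram_sum_smul [CommSemiring R] (A : Matrix ι ι R) (F : ι → Matrix n n R) :
    traceGram (fun i => ∑ j, A i j • F j) = A * traceGram F * Aᵀ := by
  ext i j
  simp only [traceGram, of_apply, Finset.sum_mul, Finset.mul_sum, trace_sum, smul_mul_smul_comm,
    trace_smul, smul_eq_mul, mul_apply, transpose_apply]
  refine Finset.sum_congr rfl fun k _ => Finset.sum_congr rfl fun l _ => ?_
  ring

variable [Field K]

theorem mulVec_one_eq_one_of_trace_eq {A : Matrix ι ι K} {F : ι → Matrix n n K} {c : K}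
    (hc : c ≠ 0) (hF : ∀ j, (F j).trace = c) (hAF : ∀ i, (∑ j, A i j • F j).trace = c) :
    A *ᵥ 1 = 1 := by
  funext i
  have h := hAF i
  simp only [trace_sum, trace_smul, hF, smul_eq_mul, ← Finset.sum_mul, mul_eq_right₀ hc] at h
  simpa [mulVec, dotProduct] using h

theorem mul_transpose_eq_one_of_conj_eq [DecidableEq ι] {A : Matrix ι ι K} {a b : K}
    (ha : a ≠ 0) (hA1 : A *ᵥ 1 = 1)
    (hA : A * (a • 1 + b • vecMulVec 1 1) * Aᵀ = a • 1 + b • vecMulVec 1 1) :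
    A * Aᵀ = 1 := by
  have hJ : A * vecMulVec 1 1 * Aᵀ = vecMulVec 1 1 := by
    rw [mul_vecMulVec, vecMulVec_mul, vecMul_transpose, hA1]
  rw [Matrix.mul_add, Matrix.add_mul, Matrix.mul_smul, Matrix.mul_smul, Matrix.smul_mul,
    Matrix.smul_mul, Matrix.mul_one, hJ, add_left_inj] at hA
  exact smul_right_injective _ ha hA

theorem trace_vecMulVec_star_mul_vecMulVec_star (a b : n → ℂ) :
    (vecMulVec a (star a) * vecMulVec b (star b)).trace = (‖star a ⬝ᵥ b‖ : ℂ) ^ 2 := by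
  have hconj : a ⬝ᵥ star b = star (star a ⬝ᵥ b) := by simp [dotProduct, star_sum, mul_comm]
  rw [vecMulVec_mul_vecMulVec, trace_vecMulVec, dotProduct_smul, smul_eq_mul, hconj,
    Complex.star_def, Complex.mul_conj']

end Matrix

namespace IsSIC

variable {d : ℕ} {ψ : Fin (d ^ 2) → Fin d → ℂ}

theorem dotProduct_star_self (hψ : IsSIC d ψ) (k : Fin (d ^ 2)) :
    star (ψ k) ⬝ᵥ ψ k = 1 := by
  have hnorm : ‖star (ψ k) ⬝ᵥ ψ k‖ = 1 := by
    have h := hψ k k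
    rw [if_pos rfl, div_self (by positivity)] at h
    exact (pow_eq_one_iff_of_nonneg (norm_nonneg _) two_ne_zero).mp h
  open ComplexOrder in
  rw [Complex.eq_coe_norm_of_nonneg (dotProduct_star_self_nonneg _), hnorm, Complex.ofReal_one]

theorem trace_sicProj (hψ : IsSIC d ψ) (k : Fin (d ^ 2)) :
    (sicProj d ψ k).trace = (d : ℂ)⁻¹ := by
  rw [sicProj, trace_smul, trace_vecMulVec, dotProduct_comm, hψ.dotProduct_star_self, smul_eq_mul,
    mul_one]

theorem traceGram_sicProj (hψ : IsSIC d ψ) :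
    traceGram (sicProj d ψ) =
      ((d * (d + 1) : ℂ)⁻¹) • 1 + ((d ^ 2 * (d + 1) : ℂ)⁻¹) • vecMulVec 1 1 := by
  ext i j
  have h := hψ i j
  simp only [traceGram, of_apply, sicProj, smul_mul_smul_comm, trace_smul,
    trace_vecMulVec_star_mul_vecMulVec_star, Matrix.add_apply, Matrix.smul_apply, one_apply,
    vecMulVec_apply]
  rw [← Complex.ofReal_pow, h, Pi.one_apply, Pi.one_apply, smul_eq_mul, smul_eq_mul, smul_eq_mul]
  have hd : (d : ℂ) ≠ 0 := Nat.cast_ne_zero.mpr fun hd => by subst hd; exact i.elim0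
  split_ifs
  · push_cast
    field_simp
  · push_cast
    field_simp
    ring

end IsSIC

theorem sic_transition_orthogonal (d : ℕ) (hd : 0 < d)
    (ψ : Fin (d ^ 2) → Fin d → ℂ) (hsic : IsSIC d ψ)
    (φ : Fin (d ^ 2) → Fin d → ℂ) (hsic' : IsSIC d φ)
    (E : Fin (d ^ 2) → Matrix (Fin d) (Fin d) ℂ)
    (hE : ∀ k, E k = (Real.sqrt ((d : ℝ) * ((d : ℝ) + 1) / 2) : ℂ) • sicProj d ψ k)
    (E' : Fin (d ^ 2) → Matrix (Fin d) (Fin d) ℂ)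
    (hE' : ∀ k, E' k = (Real.sqrt ((d : ℝ) * ((d : ℝ) + 1) / 2) : ℂ) • sicProj d φ k)
    (O : Matrix (Fin (d ^ 2)) (Fin (d ^ 2)) ℝ)
    (hO : ∀ i, E' i = ∑ j, (O i j : ℂ) • E j) :
    Oᵀ * O = 1 ∧ O * Oᵀ = 1 := by
  set A : Matrix (Fin (d ^ 2)) (Fin (d ^ 2)) ℂ := O.map Complex.ofRealHom
  have hd0 : (d : ℂ) ≠ 0 := Nat.cast_ne_zero.mpr hd.ne'
  have hs : (Real.sqrt ((d : ℝ) * ((d : ℝ) + 1) / 2) : ℂ) ≠ 0 := by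
    rw [Complex.ofReal_ne_zero]
    positivity
  have hφψ : ∀ i, sicProj d φ i = ∑ j, A i j • sicProj d ψ j := by
    intro i
    apply smul_right_injective _ hs
    beta_reduce
    rw [← hE', hO i, Finset.smul_sum]
    refine Finset.sum_congr rfl fun j _ => ?_
    rw [hE, smul_comm]
    rfl
  have hA1 : A *ᵥ 1 = 1 := mulVec_one_eq_one_of_trace_eq (inv_ne_zero hd0) hsic.trace_sicProj
    fun i => hφψ i ▸ hsic'.trace_sicProj i
  have hAG := traceGram_sum_smul A (sicProj d ψ)
  rw [← funext hφψ, hsic.traceGram_sicProj, hsic'.traceGram_sicProj] at hAG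
  have hAAt : A * Aᵀ = 1 :=
    mul_transpose_eq_one_of_conj_eq (inv_ne_zero (mul_ne_zero hd0 (by norm_cast))) hA1 hAG.symm
  have hOOt : O * Oᵀ = 1 := by
    apply map_injective Complex.ofRealHom.injective
    beta_reduce
    rwa [Matrix.map_mul, transpose_map, Matrix.map_one _ (map_zero _) (map_one _)]
  exact ⟨mul_eq_one_comm.mp hOOt, hOOt⟩
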